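/- arXiv:2406.10407 — 4 statements merged into one kernel-verified Lean document; each statement's English description precedes it below -/
import Mathlib

section
/- Let n, m be positive integers, let C, A_1, …, A_m be real symmetric n×n matrices, let b ∈ ℝ^m, and let α ≥ 0. If the feasible set F = {X ∈ Δ_α : 𝒜(X) = b} is nonempty, then strong duality holds between the trace-bounded SDP and its dual: inf_{X ∈ F} ⟨C, X⟩ = sup_{λ ∈ ℝ^m} ( λᵀb + α · min{λ_min(C − 𝒜*(λ)), 0} ), and moreover the infimum on the left-hand side is attained by some X ∈ F. -/
/-!
The feasible set is a closed subset of the compact convex set `Δ_α`, so the primal minimum is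
attained. For a fixed multiplier `λ`, the minimum of `⟨C - 𝒜*(λ), X⟩` over `Δ_α` is
`α · min (λ_min (C - 𝒜*(λ))) 0`, attained at `0` or at `α` times the projection onto a bottom
eigenvector; this gives weak duality. If `r` is below the primal optimum, the point `(b, r)` lies
outside the compact convex image of `Δ_α` under `X ↦ (𝒜(X), ⟨C, X⟩)`. A strictly separating
hyperplane puts positive weight on the last coordinate, because the image contains a feasible
point `(b, ⟨C, X⟩)` with `⟨C, X⟩ > r`; normalising that weight to `1` yields a multiplier whose
dual value exceeds `r`.
-/

open Matrix BigOperators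

/-- Frobenius inner product of two real matrices: ⟨A, B⟩ = Σ_{i,j} A_{ij} B_{ij}. -/
noncomputable def ip {n : ℕ} (A B : Matrix (Fin n) (Fin n) ℝ) : ℝ := ∑ i, ∑ j, A i j * B i j

/-- Δ_α = {X ⪰ 0 : trace(X) ≤ α}. -/
def Delta (n : ℕ) (α : ℝ) : Set (Matrix (Fin n) (Fin n) ℝ) :=
  {X | X.PosSemidef ∧ X.trace ≤ α}

/-- Smallest eigenvalue of a real symmetric (Hermitian) matrix. -/
noncomputable def lambdaMin {n : ℕ} (M : Matrix (Fin n) (Fin n) ℝ) : ℝ :=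
  if h : M.IsHermitian then ⨅ i, h.eigenvalues i else 0

lemma ContinuousLinearMap.apply_prod_eq_sum {ι : Type*} [Fintype ι] [DecidableEq ι]
    (f : (ι → ℝ) × ℝ →L[ℝ] ℝ) (y : ι → ℝ) (t : ℝ) :
    f (y, t) = ∑ i, y i * f (Pi.single i 1, 0) + t * f (0, 1) := by
  have hyt : (y, t) = ∑ i, y i • ((Pi.single i 1 : ι → ℝ), (0 : ℝ)) + t • (0, 1) := by
    ext <;> simp [Prod.fst_sum, Prod.snd_sum, Finset.sum_apply, Pi.single_apply]
  rw [hyt]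
  simp only [map_add, map_sum, map_smul, smul_eq_mul]

theorem IsCompact.exists_forall_le_of_eq_constraints {E ι : Type*} [TopologicalSpace E]
    {K : Set E} (hK : IsCompact K) {c : E → ℝ} (hc : Continuous c) {a : ι → E → ℝ}
    (ha : ∀ i, Continuous (a i)) {b : ι → ℝ} (hfeas : ∃ x ∈ K, ∀ i, a i x = b i) :
    ∃ x ∈ K, (∀ i, a i x = b i) ∧ ∀ y ∈ K, (∀ i, a i y = b i) → c x ≤ c y := by
  have hclosed : IsClosed {x | ∀ i, a i x = b i} := by
    simp only [Set.ofPred_forall]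
    exact isClosed_iInter fun i => isClosed_eq (ha i) continuous_const
  obtain ⟨x, ⟨hxK, hxb⟩, hmin⟩ := (hK.inter_right hclosed).exists_isMinOn hfeas hc.continuousOn
  exact ⟨x, hxK, hxb, fun y hyK hyb => hmin ⟨hyK, hyb⟩⟩

theorem exists_lagrangian_gt {E ι : Type*} [AddCommGroup E] [Module ℝ E] [TopologicalSpace E]
    [Fintype ι] {K : Set E} (hK : IsCompact K) (hKconv : Convex ℝ K) (c : E →L[ℝ] ℝ)
    (a : ι → E →L[ℝ] ℝ) (b : ι → ℝ) {r : ℝ} (hfeas : ∃ x ∈ K, ∀ i, a i x = b i)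
    (hr : ∀ x ∈ K, (∀ i, a i x = b i) → r < c x) :
    ∃ lam : ι → ℝ, ∀ x ∈ K, r < c x + ∑ i, lam i * (b i - a i x) := by
  classical
  let Φ : E →L[ℝ] (ι → ℝ) × ℝ := (ContinuousLinearMap.pi a).prod c
  have hnot : (b, r) ∉ Φ '' K := by
    rintro ⟨x, hx, hΦx⟩
    simp only [Φ, ContinuousLinearMap.prod_apply, ContinuousLinearMap.pi_apply, Prod.ext_iff,
      funext_iff] at hΦx
    exact (hr x hx hΦx.1).ne' hΦx.2
  obtain ⟨f, u, hfu, hsep⟩ := geometric_hahn_banach_point_closed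
    (hKconv.linear_image Φ.toLinearMap) (hK.image Φ.continuous).isClosed hnot
  have hsep' (x : E) (hx : x ∈ K) : u < f (Φ x) := hsep _ ⟨x, hx, rfl⟩
  set ℓ : ι → ℝ := fun i => f (Pi.single i 1, 0)
  set μ := f (0, 1)
  have hgap (x : E) (hx : x ∈ K) : 0 < ∑ i, (a i x - b i) * ℓ i + (c x - r) * μ := by
    have : f (Φ x) - f (b, r) = ∑ i, (a i x - b i) * ℓ i + (c x - r) * μ := by
      rw [← map_sub, Prod.mk_sub_mk]
      exact f.apply_prod_eq_sum _ _
    linarith [hsep' x hx]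
  obtain ⟨x₀, hx₀, hx₀b⟩ := hfeas
  have hμ : 0 < μ := by
    have := hgap x₀ hx₀
    simp only [hx₀b, sub_self, zero_mul, Finset.sum_const_zero, zero_add] at this
    exact pos_of_mul_pos_right this (sub_pos.mpr (hr x₀ hx₀ hx₀b)).le
  refine ⟨fun i => -ℓ i / μ, fun x hx => ?_⟩
  have : ∑ i, -ℓ i / μ * (b i - a i x) = (∑ i, (a i x - b i) * ℓ i) / μ := by
    rw [Finset.sum_div]
    exact Finset.sum_congr rfl fun i _ => by ring
  rw [this, ← sub_lt_iff_lt_add', lt_div_iff₀ hμ]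
  linarith [hgap x hx]

namespace Matrix.IsHermitian
variable {𝕜 n : Type*} [RCLike 𝕜] [Fintype n] [DecidableEq n] {A : Matrix n n 𝕜}

lemma trace_mul_eq_sum_eigenvalues (hA : A.IsHermitian) (X : Matrix n n 𝕜) :
    (A * X).trace = ∑ i, (hA.eigenvalues i : 𝕜) *
      (star (hA.eigenvectorUnitary : Matrix n n 𝕜) * X * hA.eigenvectorUnitary) i i := by
  conv_lhs => rw [hA.spectral_theorem, Unitary.conjStarAlgAut_apply, trace_mul_comm,
    ← Matrix.mul_assoc, trace_mul_cycle, ← Matrix.mul_assoc]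
  simp [trace, mul_diagonal, mul_comm]

open scoped ComplexOrder in
lemma exists_posSemidef_trace_eq_one_trace_mul_eq_eigenvalues (hA : A.IsHermitian) (i : n) :
    ∃ P : Matrix n n 𝕜, P.PosSemidef ∧ P.trace = 1 ∧ (A * P).trace = hA.eigenvalues i := by
  set U : Matrix n n 𝕜 := ↑hA.eigenvectorUnitary
  have hUU : star U * U = 1 := Unitary.star_mul_self_of_mem hA.eigenvectorUnitary.2
  set D : Matrix n n 𝕜 := diagonal (Pi.single i 1)
  refine ⟨U * D * star U, ?_, ?_, ?_⟩
  · exact (PosSemidef.diagonal (Pi.single_nonneg.mpr zero_le_one)).mul_mul_conjTranspose_same U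
  · rw [trace_mul_cycle, hUU, Matrix.one_mul]
    simp [D]
  · have : star U * (U * D * star U) * U = D := by
      simp only [← Matrix.mul_assoc, hUU, Matrix.one_mul, Matrix.mul_assoc D, Matrix.mul_one]
    rw [hA.trace_mul_eq_sum_eigenvalues, this]
    simp [D, Pi.single_apply]

end Matrix.IsHermitian

namespace Matrix.PosSemidef
variable {n : Type*} [Fintype n] {X : Matrix n n ℝ}

lemma two_mul_abs_apply_le (hX : X.PosSemidef) (i j : n) : 2 * |X i j| ≤ X i i + X j j := by
  classical
  have hsymm : X j i = X i j := by simpa using hX.isHermitian.apply i j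
  have quad (s : ℝ) : 0 ≤ X i i + 2 * s * X i j + s ^ 2 * X j j := by
    have := hX.dotProduct_mulVec_nonneg (Pi.single i 1 + s • Pi.single j 1)
    simp [mulVec_add, mulVec_smul, dotProduct_add, add_dotProduct, hsymm] at this
    linarith
  rcases abs_cases (X i j) with ⟨h, _⟩ | ⟨h, _⟩ <;> rw [h] <;> nlinarith [quad 1, quad (-1)]

lemma abs_apply_le_trace (hX : X.PosSemidef) (i j : n) : |X i j| ≤ X.trace := by
  have hdiag (k : n) : X k k ≤ X.trace :=
    Finset.single_le_sum (fun l _ => hX.diag_nonneg (i := l)) (Finset.mem_univ k)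
  linarith [hX.two_mul_abs_apply_le i j, hdiag i, hdiag j]

end Matrix.PosSemidef

lemma Matrix.isClosed_setOf_posSemidef {n : Type*} [Fintype n] :
    IsClosed {X : Matrix n n ℝ | X.PosSemidef} := by
  simp only [posSemidef_iff_dotProduct_mulVec, Set.ofPred_and, Set.ofPred_forall]
  refine (isClosed_eq continuous_id.matrix_conjTranspose continuous_id).inter
    (isClosed_iInter fun x => isClosed_le continuous_const ?_)
  fun_prop

section ip
variable {n : ℕ}

lemma ip_comm (A B : Matrix (Fin n) (Fin n) ℝ) : ip A B = ip B A := by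
  simp [ip, mul_comm]

lemma ip_eq_trace_mul {M : Matrix (Fin n) (Fin n) ℝ} (hM : M.IsHermitian)
    (X : Matrix (Fin n) (Fin n) ℝ) : ip M X = (M * X).trace := by
  simp only [ip, trace, diag, mul_apply]
  rw [Finset.sum_comm]
  refine Finset.sum_congr rfl fun i _ => Finset.sum_congr rfl fun j _ => ?_
  rw [← hM.apply i j, star_trivial]

lemma ip_add_right (M X Y : Matrix (Fin n) (Fin n) ℝ) : ip M (X + Y) = ip M X + ip M Y := by
  simp [ip, mul_add, Finset.sum_add_distrib]

lemma ip_smul_right (c : ℝ) (M X : Matrix (Fin n) (Fin n) ℝ) : ip M (c • X) = c * ip M X := by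
  simp [ip, Finset.mul_sum, mul_left_comm]

noncomputable def ipCLM (M : Matrix (Fin n) (Fin n) ℝ) : Matrix (Fin n) (Fin n) ℝ →L[ℝ] ℝ :=
  LinearMap.toContinuousLinearMap
    { toFun := ip M, map_add' := ip_add_right M, map_smul' := fun c X => ip_smul_right c M X }

@[simp] lemma ipCLM_apply (M X : Matrix (Fin n) (Fin n) ℝ) : ipCLM M X = ip M X := rfl

lemma continuous_ip (M : Matrix (Fin n) (Fin n) ℝ) : Continuous (ip M) := (ipCLM M).continuous

lemma ip_sub_sum_smul_add_sum_mul {m : ℕ} (C : Matrix (Fin n) (Fin n) ℝ)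
    (A : Fin m → Matrix (Fin n) (Fin n) ℝ) (lam b : Fin m → ℝ) (X : Matrix (Fin n) (Fin n) ℝ) :
    ip (C - ∑ i, lam i • A i) X + ∑ i, lam i * b i =
      ip C X + ∑ i, lam i * (b i - ip (A i) X) := by
  simp only [ip_comm _ X, ← ipCLM_apply, map_sub, map_sum, map_smul, smul_eq_mul, mul_sub,
    Finset.sum_sub_distrib]
  ring

end ip

section lambdaMin
variable {n : ℕ} {M : Matrix (Fin n) (Fin n) ℝ}

lemma lambdaMin_le_eigenvalues (hM : M.IsHermitian) (i : Fin n) :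
    lambdaMin M ≤ hM.eigenvalues i := by
  rw [lambdaMin, dif_pos hM]
  exact ciInf_le (Set.finite_range _).bddBelow i

lemma exists_eigenvalues_eq_lambdaMin [Nonempty (Fin n)] (hM : M.IsHermitian) :
    ∃ i, hM.eigenvalues i = lambdaMin M := by
  rw [lambdaMin, dif_pos hM]
  exact exists_eq_ciInf_of_finite

lemma lambdaMin_of_isEmpty [IsEmpty (Fin n)] : lambdaMin M = 0 := by
  unfold lambdaMin
  split_ifs <;> simp

lemma lambdaMin_mul_trace_le {X : Matrix (Fin n) (Fin n) ℝ} (hM : M.IsHermitian)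
    (hX : X.PosSemidef) : lambdaMin M * X.trace ≤ (M * X).trace := by
  set U : Matrix (Fin n) (Fin n) ℝ := ↑hM.eigenvectorUnitary
  have hY : (star U * X * U).PosSemidef := hX.conjTranspose_mul_mul_same U
  have htrace : X.trace = (star U * X * U).trace := by
    rw [trace_mul_cycle, Unitary.mul_star_self_of_mem hM.eigenvectorUnitary.2, Matrix.one_mul]
  rw [hM.trace_mul_eq_sum_eigenvalues, htrace, trace, Finset.mul_sum]
  exact Finset.sum_le_sum fun i _ =>
    mul_le_mul_of_nonneg_right (lambdaMin_le_eigenvalues hM i) hY.diag_nonneg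

end lambdaMin

section Delta
variable {n : ℕ} {α : ℝ}

lemma convex_Delta : Convex ℝ (Delta n α) := by
  intro X hX Y hY a b ha hb hab
  refine ⟨(hX.1.smul ha).add (hY.1.smul hb), ?_⟩
  rw [trace_add, trace_smul, trace_smul, smul_eq_mul, smul_eq_mul]
  calc a * X.trace + b * Y.trace ≤ a * α + b * α := by gcongr; exacts [hX.2, hY.2]
    _ = α := by rw [← add_mul, hab, one_mul]

lemma isCompact_Delta : IsCompact (Delta n α) := by
  refine (isCompact_univ_pi fun _ => isCompact_univ_pi fun _ => isCompact_Icc (a := -α) (b := α))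
    |>.of_isClosed_subset ?_ fun X hX i _ j _ => ?_
  · exact isClosed_setOf_posSemidef.inter (isClosed_le continuous_id.matrix_trace continuous_const)
  · exact abs_le.mp ((hX.1.abs_apply_le_trace i j).trans hX.2)

lemma isLeast_ip_image_Delta {M : Matrix (Fin n) (Fin n) ℝ} (hM : M.IsHermitian) (hα : 0 ≤ α) :
    IsLeast (ip M '' Delta n α) (α * min (lambdaMin M) 0) := by
  refine ⟨?_, ?_⟩
  · have zero_mem : (0 : Matrix (Fin n) (Fin n) ℝ) ∈ Delta n α := ⟨.zero, by simpa using hα⟩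
    rcases le_total 0 (lambdaMin M) with h | h
    · exact ⟨0, zero_mem, by simp [ip, min_eq_right h]⟩
    rcases isEmpty_or_nonempty (Fin n) with hn | hn
    · exact ⟨0, zero_mem, by simp [ip, lambdaMin_of_isEmpty]⟩
    obtain ⟨i, hi⟩ := exists_eigenvalues_eq_lambdaMin hM
    obtain ⟨P, hP, hPtr, hMP⟩ := hM.exists_posSemidef_trace_eq_one_trace_mul_eq_eigenvalues i
    refine ⟨α • P, ⟨hP.smul hα, by simp [hPtr]⟩, ?_⟩
    rw [ip_smul_right, ip_eq_trace_mul hM, min_eq_left h, hMP, RCLike.ofReal_real_eq_id, id, hi]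
  · rintro _ ⟨X, ⟨hX, hXα⟩, rfl⟩
    rw [ip_eq_trace_mul hM]
    refine le_trans ?_ (lambdaMin_mul_trace_le hM hX)
    rcases le_total (lambdaMin M) 0 with h | h
    · rw [min_eq_left h, mul_comm]
      exact mul_le_mul_of_nonpos_left hXα h
    · rw [min_eq_right h, mul_zero]
      exact mul_nonneg h hX.trace_nonneg

end Delta

theorem trace_bounded_sdp_strong_duality_general
    (n m : ℕ)
    (C : Matrix (Fin n) (Fin n) ℝ) (hC : C.IsHermitian)
    (A : Fin m → Matrix (Fin n) (Fin n) ℝ) (hA : ∀ i, (A i).IsHermitian)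
    (b : Fin m → ℝ) (α : ℝ) (hα : 0 ≤ α)
    (hfeas : ∃ X ∈ Delta n α, ∀ i, ip (A i) X = b i) :
    ∃ Xstar ∈ Delta n α, (∀ i, ip (A i) Xstar = b i) ∧
      IsLeast {v : ℝ | ∃ X ∈ Delta n α, (∀ i, ip (A i) X = b i) ∧ v = ip C X}
        (ip C Xstar) ∧
      IsLUB {v : ℝ | ∃ lam : Fin m → ℝ,
          v = (∑ i, lam i * b i) + α * min (lambdaMin (C - ∑ i, lam i • A i)) 0}
        (ip C Xstar) := by
  have hM (lam : Fin m → ℝ) : (C - ∑ i, lam i • A i).IsHermitian :=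
    hC.sub (isSelfAdjoint_sum _ fun i _ => (hA i).smul (IsSelfAdjoint.all (lam i)))
  obtain ⟨Xs, hXs, hXsb, hopt⟩ := isCompact_Delta.exists_forall_le_of_eq_constraints
    (continuous_ip C) (fun i => continuous_ip (A i)) hfeas
  refine ⟨Xs, hXs, hXsb, ⟨⟨Xs, hXs, hXsb, rfl⟩, ?_⟩, ⟨?_, fun ub hub => ?_⟩⟩
  · rintro _ ⟨X, hX, hXb, rfl⟩
    exact hopt X hX hXb
  · rintro _ ⟨lam, rfl⟩
    have := ip_sub_sum_smul_add_sum_mul C A lam b Xs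
    simp only [hXsb, sub_self, mul_zero, Finset.sum_const_zero, add_zero] at this
    linarith [(isLeast_ip_image_Delta (hM lam) hα).2 ⟨Xs, hXs, rfl⟩]
  · by_contra! hlt
    obtain ⟨lam, hlam⟩ := exists_lagrangian_gt isCompact_Delta convex_Delta (ipCLM C)
      (fun i => ipCLM (A i)) b hfeas fun X hX hXb => hlt.trans_le (hopt X hX hXb)
    obtain ⟨X, hX, hXmin⟩ := (isLeast_ip_image_Delta (hM lam) hα).1
    have hgt := hlam X hX
    simp only [ipCLM_apply] at hgt
    have := ip_sub_sum_smul_add_sum_mul C A lam b X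
    linarith [hub ⟨lam, rfl⟩]

/-- Strong duality for the trace-bounded SDP: if the feasible set
`F = {X ∈ Δ_α : 𝒜(X) = b}` is nonempty, the primal optimum is attained by some
`Xstar ∈ F`, and its value is the least upper bound of the dual values
`λᵀb + α · min{λ_min(C − 𝒜*(λ)), 0}`. -/
theorem trace_bounded_sdp_strong_duality
    (n m : ℕ) (hn : 0 < n) (hm : 0 < m)
    (C : Matrix (Fin n) (Fin n) ℝ) (hC : C.IsHermitian)
    (A : Fin m → Matrix (Fin n) (Fin n) ℝ) (hA : ∀ i, (A i).IsHermitian)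
    (b : Fin m → ℝ) (α : ℝ) (hα : 0 ≤ α)
    (hfeas : ∃ X ∈ Delta n α, ∀ i, ip (A i) X = b i) :
    ∃ Xstar ∈ Delta n α, (∀ i, ip (A i) Xstar = b i) ∧
      IsLeast {v : ℝ | ∃ X ∈ Delta n α, (∀ i, ip (A i) X = b i) ∧ v = ip C X}
        (ip C Xstar) ∧
      IsLUB {v : ℝ | ∃ lam : Fin m → ℝ,
          v = (∑ i, lam i * b i) + α * min (lambdaMin (C - ∑ i, lam i • A i)) 0}
        (ip C Xstar) :=
  trace_bounded_sdp_strong_duality_general n m C hC A hA b α hα hfeas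
end

section
/- Consider the SDP over 3×3 real symmetric positive semidefinite matrices X: minimize ⟨C, X⟩ where C has entries C_{12} = C_{21} = 1/2 and all other entries 0, subject to the four constraints ⟨B_1, X⟩ = 0, ⟨B_2, X⟩ = 0, ⟨B_3, X⟩ = 0, ⟨B_4, X⟩ = −2, where B_1 has entries (B_1)_{13} = (B_1)_{31} = 1 and zeros elsewhere, B_2 has entries (B_2)_{23} = (B_2)_{32} = 1 and zeros elsewhere, B_3 has entry (B_3)_{11} = 1 and zeros elsewhere, and B_4 has entries (B_4)_{12} = (B_4)_{21} = 1, (B_4)_{33} = −2 and zeros elsewhere. This SDP is feasible and its optimal value equals 0; in fact every feasible X satisfies ⟨C, X⟩ = 0. -/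
/-!
A positive semidefinite matrix with a zero diagonal entry has the whole corresponding row
equal to zero, since its `2 × 2` principal minors are nonnegative. The constraint
`⟨B₃, X⟩ = X₁₁ = 0` therefore forces `X₁₂ = X₂₁ = 0`, so the objective `⟨C, X⟩ = X₁₂` vanishes
on the whole feasible set, which contains `diag(0, 0, 1)`.
-/

open Matrix BigOperators
open scoped ComplexOrder

theorem Matrix.PosSemidef.apply_eq_zero_of_diag_eq_zero {n 𝕜 : Type*} [Fintype n] [RCLike 𝕜]
    {A : Matrix n n 𝕜} (hA : A.PosSemidef) {i : n} (hi : A i i = 0) (j : n) : A i j = 0 := by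
  classical
  have hdet := (hA.submatrix ![i, j]).det_nonneg
  have hji : A j i = star (A i j) := (hA.1.apply j i).symm
  rw [det_fin_two] at hdet
  simp only [submatrix_apply, Matrix.cons_val_zero, Matrix.cons_val_one, hi, hji, zero_mul,
    RCLike.star_def, RCLike.mul_conj, zero_sub, neg_nonneg] at hdet
  have : ‖A i j‖ ^ 2 ≤ 0 := by exact_mod_cast hdet
  simpa using this

theorem ip_diagonal {n : ℕ} (A : Matrix (Fin n) (Fin n) ℝ) (d : Fin n → ℝ) :
    ip A (diagonal d) = ∑ i, A i i * d i := by
  simp [ip, diagonal_apply]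

/-- The duality-gap example primal SDP: it is feasible and every feasible `X ⪰ 0`
(satisfying `⟨B₁,X⟩ = ⟨B₂,X⟩ = ⟨B₃,X⟩ = 0` and `⟨B₄,X⟩ = −2`) has objective
`⟨C, X⟩ = 0`; hence the optimal value is `0`. -/
theorem duality_gap_example_primal :
    let C : Matrix (Fin 3) (Fin 3) ℝ := !![0, 1/2, 0; 1/2, 0, 0; 0, 0, 0]
    let B1 : Matrix (Fin 3) (Fin 3) ℝ := !![0, 0, 1; 0, 0, 0; 1, 0, 0]
    let B2 : Matrix (Fin 3) (Fin 3) ℝ := !![0, 0, 0; 0, 0, 1; 0, 1, 0]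
    let B3 : Matrix (Fin 3) (Fin 3) ℝ := !![1, 0, 0; 0, 0, 0; 0, 0, 0]
    let B4 : Matrix (Fin 3) (Fin 3) ℝ := !![0, 1, 0; 1, 0, 0; 0, 0, -2]
    (∃ X : Matrix (Fin 3) (Fin 3) ℝ, X.PosSemidef ∧
        ip B1 X = 0 ∧ ip B2 X = 0 ∧ ip B3 X = 0 ∧ ip B4 X = -2) ∧
    (∀ X : Matrix (Fin 3) (Fin 3) ℝ, X.PosSemidef →
        ip B1 X = 0 → ip B2 X = 0 → ip B3 X = 0 → ip B4 X = -2 → ip C X = 0) ∧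
    IsLeast {v : ℝ | ∃ X : Matrix (Fin 3) (Fin 3) ℝ, X.PosSemidef ∧
        ip B1 X = 0 ∧ ip B2 X = 0 ∧ ip B3 X = 0 ∧ ip B4 X = -2 ∧ v = ip C X} 0 := by
  intro C B1 B2 B3 B4
  set X₀ : Matrix (Fin 3) (Fin 3) ℝ := diagonal ![0, 0, 1]
  have feasible : X₀.PosSemidef ∧ ip B1 X₀ = 0 ∧ ip B2 X₀ = 0 ∧ ip B3 X₀ = 0 ∧ ip B4 X₀ = -2 := by
    refine ⟨.diagonal fun i ↦ by fin_cases i <;> norm_num, ?_⟩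
    simp [X₀, ip_diagonal, Fin.sum_univ_three, B1, B2, B3, B4]
  have objective_eq_zero : ∀ X : Matrix (Fin 3) (Fin 3) ℝ, X.PosSemidef →
      ip B1 X = 0 → ip B2 X = 0 → ip B3 X = 0 → ip B4 X = -2 → ip C X = 0 := by
    intro X hX _ _ h3 _
    have h00 : X 0 0 = 0 := by simpa [ip, Fin.sum_univ_three, B3] using h3
    have h01 := hX.apply_eq_zero_of_diag_eq_zero h00 1
    have h10 : X 1 0 = 0 := by rw [← hX.1.apply 1 0, h01, star_zero]
    simp [ip, Fin.sum_univ_three, C, h01, h10]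
  obtain ⟨hX₀, h₁, h₂, h₃, h₄⟩ := feasible
  refine ⟨⟨X₀, hX₀, h₁, h₂, h₃, h₄⟩, objective_eq_zero,
    ⟨X₀, hX₀, h₁, h₂, h₃, h₄, (objective_eq_zero X₀ hX₀ h₁ h₂ h₃ h₄).symm⟩, ?_⟩
  rintro v ⟨X, hX, h₁, h₂, h₃, h₄, rfl⟩
  exact (objective_eq_zero X hX h₁ h₂ h₃ h₄).ge
end

section
/- Consider the trace-bounded dual function over λ = (λ_1, λ_2, λ_3, λ_4) ∈ ℝ^4: g(λ) = −2λ_4 + min{0, λ_min(M(λ))}, where M(λ) is the 3×3 real symmetric matrix with rows [−λ_3, 1/2 − λ_4, −λ_1], [1/2 − λ_4, 0, −λ_2], [−λ_1, −λ_2, 2λ_4]. Then sup_{λ ∈ ℝ^4} g(λ) = 0, and the supremum is attained at λ_1 = λ_2 = λ_3 = 0, λ_4 = −1/2. Hence for the corresponding primal SDP with added trace bound trace(X) ≤ 1 (whose optimal value is 0), the duality gap vanishes. -/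
open Matrix BigOperators

/-!
For every `λ`, `g(λ) ≤ -2λ₄ + λ_min(M(λ)) ≤ -2λ₄ + M(λ)₃₃ = 0`. At `λ* = (0, 0, 0, -1/2)` the
matrix `M(λ*) + I` is the rank-one matrix `v vᵀ` with `v = (1, 1, 0)`, so `λ_min(M(λ*)) ≥ -1` and
`g(λ*) ≥ 0`. On the primal side, `⟨B₃, X⟩ = X₁₁ = 0` forces the first row of the positive
semidefinite `X` to vanish, so `⟨C, X⟩ = X₁₂ = 0` on the whole feasible set, which contains
`diag(0, 0, 1)`.
-/

namespace Matrix

variable {n : ℕ} {A : Matrix (Fin n) (Fin n) ℝ}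

theorem IsHermitian.le_lambdaMin_iff [NeZero n] (hA : A.IsHermitian) {c : ℝ} :
    c ≤ lambdaMin A ↔ (A - c • 1).PosSemidef := by
  have hc : (A - c • 1).IsHermitian := hA.sub (isHermitian_one.smul (IsSelfAdjoint.all c))
  rw [lambdaMin, dif_pos hA, le_ciInf_iff (Set.finite_range _).bddBelow,
    posSemidef_iff_isHermitian_and_spectrum_nonneg, and_iff_right hc,
    ← Algebra.algebraMap_eq_smul_one, ← spectrum.sub_singleton_eq,
    hA.spectrum_real_eq_range_eigenvalues]
  simp [Set.subset_def, sub_nonneg]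

theorem IsHermitian.lambdaMin_le_apply_self (hA : A.IsHermitian) (i : Fin n) :
    lambdaMin A ≤ A i i := by
  have : NeZero n := ⟨fun h => (h ▸ i).elim0⟩
  simpa [sub_nonneg] using (hA.le_lambdaMin_iff.mp le_rfl).diag_nonneg (i := i)

theorem PosSemidef.mul_self_apply_le {m : Type*} [Fintype m]
    {X : Matrix m m ℝ} (hX : X.PosSemidef) (i j : m) : X i j * X i j ≤ X i i * X j j := by
  have hji : X j i = X i j := by simpa using hX.isHermitian.apply i j
  have h := (hX.submatrix ![i, j]).det_nonneg
  simp only [det_fin_two, submatrix_apply] at h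
  simpa [hji, sub_nonneg] using h

theorem PosSemidef.apply_eq_zero_of_diag_eq_zero_s8 {m : Type*} [Fintype m]
    {X : Matrix m m ℝ} (hX : X.PosSemidef) {i : m} (hi : X i i = 0) (j : m) : X i j = 0 := by
  have h := hX.mul_self_apply_le i j
  rw [hi, zero_mul] at h
  exact mul_self_eq_zero.mp (le_antisymm h (mul_self_nonneg _))

end Matrix

open Matrix

noncomputable def dualMatrix (l : Fin 4 → ℝ) : Matrix (Fin 3) (Fin 3) ℝ :=
  !![-l 2, 1/2 - l 3, -l 0; 1/2 - l 3, 0, -l 1; -l 0, -l 1, 2 * l 3]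

noncomputable def dualFunction (l : Fin 4 → ℝ) : ℝ := -2 * l 3 + min 0 (lambdaMin (dualMatrix l))

theorem isHermitian_dualMatrix (l : Fin 4 → ℝ) : (dualMatrix l).IsHermitian := by
  ext i j
  fin_cases i <;> fin_cases j <;> simp [dualMatrix]

theorem dualFunction_le_zero (l : Fin 4 → ℝ) : dualFunction l ≤ 0 := by
  have h : lambdaMin (dualMatrix l) ≤ 2 * l 3 :=
    (isHermitian_dualMatrix l).lambdaMin_le_apply_self 2
  have := min_le_right 0 (lambdaMin (dualMatrix l))
  unfold dualFunction
  linarith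

theorem neg_one_le_lambdaMin_dualMatrix : -1 ≤ lambdaMin (dualMatrix ![0, 0, 0, -1/2]) := by
  rw [(isHermitian_dualMatrix _).le_lambdaMin_iff]
  convert posSemidef_vecMulVec_self_star (![1, 1, 0] : Fin 3 → ℝ) using 1
  ext i j
  fin_cases i <;> fin_cases j <;> norm_num [dualMatrix, vecMulVec, cons_val_two, cons_val_three]

theorem dualFunction_eq_zero : dualFunction ![0, 0, 0, -1/2] = 0 := by
  refine le_antisymm (dualFunction_le_zero _) ?_
  show 0 ≤ -2 * (-1/2) + min 0 (lambdaMin (dualMatrix ![0, 0, 0, -1/2]))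
  linarith [le_min (show (-1 : ℝ) ≤ 0 by norm_num) neg_one_le_lambdaMin_dualMatrix]

theorem primal_objective_eq_zero (X : Matrix (Fin 3) (Fin 3) ℝ) (hX : X.PosSemidef)
    (h : ip !![1, 0, 0; 0, 0, 0; 0, 0, 0] X = 0) : ip !![0, 1/2, 0; 1/2, 0, 0; 0, 0, 0] X = 0 := by
  have hX00 : X 0 0 = 0 := by simpa [ip, Fin.sum_univ_three] using h
  have hX01 : X 0 1 = 0 := hX.apply_eq_zero_of_diag_eq_zero_s8 hX00 1
  have hX10 : X 1 0 = 0 := by simpa [hX01] using hX.isHermitian.apply 0 1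
  simp [ip, Fin.sum_univ_three, hX01, hX10]

/-- The trace-bounded dual function `g(λ) = −2λ₄ + min{0, λ_min(M(λ))}` (with
`l 0 = λ₁, l 1 = λ₂, l 2 = λ₃, l 3 = λ₄`) has supremum `0`, attained at
`λ₁ = λ₂ = λ₃ = 0, λ₄ = −1/2`. Since the corresponding primal SDP with the added
trace bound `trace(X) ≤ 1` has optimal value `0`, the duality gap vanishes. -/
theorem trace_bounded_dual_gap_vanishes :
    let M : (Fin 4 → ℝ) → Matrix (Fin 3) (Fin 3) ℝ := fun l =>
      !![-l 2, 1/2 - l 3, -l 0;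
         1/2 - l 3, 0, -l 1;
         -l 0, -l 1, 2 * l 3]
    let g : (Fin 4 → ℝ) → ℝ := fun l => -2 * l 3 + min 0 (lambdaMin (M l))
    let C : Matrix (Fin 3) (Fin 3) ℝ := !![0, 1/2, 0; 1/2, 0, 0; 0, 0, 0]
    let B1 : Matrix (Fin 3) (Fin 3) ℝ := !![0, 0, 1; 0, 0, 0; 1, 0, 0]
    let B2 : Matrix (Fin 3) (Fin 3) ℝ := !![0, 0, 0; 0, 0, 1; 0, 1, 0]
    let B3 : Matrix (Fin 3) (Fin 3) ℝ := !![1, 0, 0; 0, 0, 0; 0, 0, 0]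
    let B4 : Matrix (Fin 3) (Fin 3) ℝ := !![0, 1, 0; 1, 0, 0; 0, 0, -2]
    IsGreatest (Set.range g) 0 ∧
    g ![0, 0, 0, -1/2] = 0 ∧
    IsLeast {v : ℝ | ∃ X : Matrix (Fin 3) (Fin 3) ℝ, X.PosSemidef ∧ X.trace ≤ 1 ∧
        ip B1 X = 0 ∧ ip B2 X = 0 ∧ ip B3 X = 0 ∧ ip B4 X = -2 ∧ v = ip C X} 0 := by
  intro M g C B1 B2 B3 B4
  refine ⟨⟨⟨_, dualFunction_eq_zero⟩, Set.forall_mem_range.2 dualFunction_le_zero⟩,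
    dualFunction_eq_zero, ⟨diagonal ![0, 0, 1], ?_⟩, ?_⟩
  · refine ⟨PosSemidef.diagonal ?_, ?_⟩
    · intro i; fin_cases i <;> simp
    · simp [trace, ip, B1, B2, B3, B4, C, Fin.sum_univ_three, diagonal]
  · rintro v ⟨X, hX, -, -, -, h3, -, rfl⟩
    exact (primal_objective_eq_zero X hX h3).ge
end

section
/- Let C, A_1, …, A_m be real symmetric n×n matrices, b ∈ ℝ^m, α ≥ 0, λ ∈ ℝ^m, and σ ≥ 0. Suppose X* ∈ Δ_α satisfies 𝒜(X*) = b and attains the minimum of ⟨C, Z⟩ over {Z ∈ Δ_α : 𝒜(Z) = b}. For X ∈ Δ_α, write p(X) = 𝒜(X) − b and λ' = λ − σ p(X). Then the surrogate duality bound ⟨C, X − X*⟩ ≤ ⟨C, X⟩ − bᵀλ' + (σ/2)‖p(X)‖² − α · min{λ_min(C − 𝒜*(λ')), 0} holds. -/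
open Matrix BigOperators

/-! The right-hand side minus `⟨C, X⟩` is `−(bᵀλ' + α · min{λ_min(C − 𝒜*(λ')), 0})`
plus the penalty `(σ/2)‖p(X)‖² ≥ 0`. The bracket is the dual objective at `λ'`, and weak duality
bounds it by `⟨C, X*⟩`: since `C − 𝒜*(λ') ⪰ λ_min · I`, pairing with `X* ⪰ 0` gives
`⟨C, X*⟩ − bᵀλ' ≥ λ_min · tr X* ≥ α · min{λ_min, 0}` as `0 ≤ tr X* ≤ α`. -/

open scoped MatrixOrder ComplexOrder

lemma Matrix.PosSemidef.trace_mul_nonneg {ι 𝕜 : Type*} [Fintype ι] [RCLike 𝕜]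
    {P Q : Matrix ι ι 𝕜} (hP : P.PosSemidef) (hQ : Q.PosSemidef) : 0 ≤ (P * Q).trace := by
  classical
  obtain ⟨B, rfl⟩ := CStarAlgebra.nonneg_iff_eq_star_mul_self.mp hQ.nonneg
  rw [star_eq_conjTranspose, ← Matrix.mul_assoc, trace_mul_comm, ← Matrix.mul_assoc]
  exact (hP.mul_mul_conjTranspose_same B).trace_nonneg

section FrobeniusInnerProduct

variable {n : ℕ}

lemma ip_eq_trace_transpose_mul (A B : Matrix (Fin n) (Fin n) ℝ) : ip A B = (Aᵀ * B).trace := by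
  simp only [ip, trace, diag, mul_apply, transpose_apply]
  exact Finset.sum_comm

lemma ip_sub_left (A B X : Matrix (Fin n) (Fin n) ℝ) : ip (A - B) X = ip A X - ip B X := by
  simp [ip_eq_trace_transpose_mul, Matrix.sub_mul]

lemma ip_smul_left (c : ℝ) (A X : Matrix (Fin n) (Fin n) ℝ) : ip (c • A) X = c * ip A X := by
  simp [ip_eq_trace_transpose_mul]

lemma ip_sum_left {m : ℕ} (A : Fin m → Matrix (Fin n) (Fin n) ℝ) (X : Matrix (Fin n) (Fin n) ℝ) :
    ip (∑ i, A i) X = ∑ i, ip (A i) X := by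
  simp [ip_eq_trace_transpose_mul, transpose_sum, Matrix.sum_mul, trace_sum]

lemma ip_one_left (X : Matrix (Fin n) (Fin n) ℝ) : ip 1 X = X.trace := by
  simp [ip_eq_trace_transpose_mul]

lemma ip_nonneg_of_posSemidef {P Q : Matrix (Fin n) (Fin n) ℝ} (hP : P.PosSemidef)
    (hQ : Q.PosSemidef) : 0 ≤ ip P Q := by
  rw [ip_eq_trace_transpose_mul, ← conjTranspose_eq_transpose_of_trivial, hP.isHermitian.eq]
  exact hP.trace_mul_nonneg hQ

end FrobeniusInnerProduct

lemma lambdaMin_smul_one_le {n : ℕ} {D : Matrix (Fin n) (Fin n) ℝ} (hD : D.IsHermitian) :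
    lambdaMin D • (1 : Matrix (Fin n) (Fin n) ℝ) ≤ D := by
  rw [← Algebra.algebraMap_eq_smul_one, algebraMap_le_iff_le_spectrum hD.isSelfAdjoint,
    hD.spectrum_real_eq_range_eigenvalues]
  rintro _ ⟨i, rfl⟩
  rw [lambdaMin, dif_pos hD]
  exact ciInf_le (Finite.bddBelow_range _) i

lemma mul_min_lambdaMin_le_ip {n : ℕ} {D X : Matrix (Fin n) (Fin n) ℝ} {α : ℝ}
    (hD : D.IsHermitian) (hX : X ∈ Delta n α) : α * min (lambdaMin D) 0 ≤ ip D X := by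
  obtain ⟨hXpsd, hXtr⟩ := hX
  have hshift : 0 ≤ ip (D - lambdaMin D • 1) X :=
    ip_nonneg_of_posSemidef (lambdaMin_smul_one_le hD) hXpsd
  rw [ip_sub_left, ip_smul_left, ip_one_left] at hshift
  have htr : 0 ≤ X.trace := hXpsd.trace_nonneg
  have hmin : α * min (lambdaMin D) 0 ≤ X.trace * min (lambdaMin D) 0 :=
    mul_le_mul_of_nonpos_right hXtr (min_le_right _ _)
  nlinarith [min_le_left (lambdaMin D) 0]

/-- Weak duality for `min ⟨C, Z⟩` subject to `𝒜(Z) = b`, `Z ∈ Δ_α`. -/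
lemma dual_bound_le_ip_of_feasible {n m : ℕ} {C : Matrix (Fin n) (Fin n) ℝ} (hC : C.IsHermitian)
    {A : Fin m → Matrix (Fin n) (Fin n) ℝ} (hA : ∀ i, (A i).IsHermitian) {b : Fin m → ℝ}
    {α : ℝ} {Z : Matrix (Fin n) (Fin n) ℝ} (hZ : Z ∈ Delta n α) (hZfeas : ∀ i, ip (A i) Z = b i)
    (y : Fin m → ℝ) :
    ∑ i, b i * y i + α * min (lambdaMin (C - ∑ i, y i • A i)) 0 ≤ ip C Z := by
  have hD : (C - ∑ i, y i • A i).IsHermitian :=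
    hC.sub (isSelfAdjoint_sum _ fun i _ => (hA i).smul (IsSelfAdjoint.all (y i)))
  have hpair : ip (C - ∑ i, y i • A i) Z = ip C Z - ∑ i, b i * y i := by
    simp only [ip_sub_left, ip_sum_left, ip_smul_left, hZfeas, mul_comm]
  linarith [mul_min_lambdaMin_le_ip hD hZ]

theorem surrogate_duality_bound_general
    (n m : ℕ)
    (C : Matrix (Fin n) (Fin n) ℝ) (hC : C.IsHermitian)
    (A : Fin m → Matrix (Fin n) (Fin n) ℝ) (hA : ∀ i, (A i).IsHermitian)
    (b : Fin m → ℝ) (α : ℝ)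
    (lam : Fin m → ℝ) (σ : ℝ) (hσ : 0 ≤ σ)
    (Xstar : Matrix (Fin n) (Fin n) ℝ)
    (hXstar : Xstar ∈ Delta n α) (hXstarFeas : ∀ i, ip (A i) Xstar = b i)
    (X : Matrix (Fin n) (Fin n) ℝ) :
    let p : Fin m → ℝ := fun i => ip (A i) X - b i
    let lam' : Fin m → ℝ := fun i => lam i - σ * p i
    ip C X - ip C Xstar ≤
      ip C X - (∑ i, b i * lam' i) + (σ / 2) * (∑ i, (p i) ^ 2)
        - α * min (lambdaMin (C - ∑ i, lam' i • A i)) 0 := by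
  intro p lam'
  have hweak := dual_bound_le_ip_of_feasible hC hA hXstar hXstarFeas lam'
  have hpenalty : 0 ≤ (σ / 2) * ∑ i, p i ^ 2 := by positivity
  linarith

/-- The SketchyCGAL surrogate duality bound: if `Xstar ∈ Δ_α` is optimal for the
trace-bounded SDP, then for every `X ∈ Δ_α`, with `p(X) = 𝒜(X) − b` and
`λ' = λ − σ p(X)`,
`⟨C, X − Xstar⟩ ≤ ⟨C, X⟩ − bᵀλ' + (σ/2)‖p(X)‖² − α·min{λ_min(C − 𝒜*(λ')), 0}`. -/
theorem surrogate_duality_bound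
    (n m : ℕ)
    (C : Matrix (Fin n) (Fin n) ℝ) (hC : C.IsHermitian)
    (A : Fin m → Matrix (Fin n) (Fin n) ℝ) (hA : ∀ i, (A i).IsHermitian)
    (b : Fin m → ℝ) (α : ℝ) (hα : 0 ≤ α)
    (lam : Fin m → ℝ) (σ : ℝ) (hσ : 0 ≤ σ)
    (Xstar : Matrix (Fin n) (Fin n) ℝ)
    (hXstar : Xstar ∈ Delta n α) (hXstarFeas : ∀ i, ip (A i) Xstar = b i)
    (hOpt : ∀ Z ∈ Delta n α, (∀ i, ip (A i) Z = b i) → ip C Xstar ≤ ip C Z)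
    (X : Matrix (Fin n) (Fin n) ℝ) (hX : X ∈ Delta n α) :
    let p : Fin m → ℝ := fun i => ip (A i) X - b i
    let lam' : Fin m → ℝ := fun i => lam i - σ * p i
    ip C X - ip C Xstar ≤
      ip C X - (∑ i, b i * lam' i) + (σ / 2) * (∑ i, (p i) ^ 2)
        - α * min (lambdaMin (C - ∑ i, lam' i • A i)) 0 :=
  surrogate_duality_bound_general n m C hC A hA b α lam σ hσ Xstar hXstar hXstarFeas X
end
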